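/- Let S be a discrete semigroup, X an L-embedded Banach space, {T_s : s ∈ S} a representation of S on X by nonexpansive maps, and B a nonempty bounded subset of X with B ⊆ cl(T_s(B)) for all s ∈ S. Let C be the Chebyshev center of B computed in X**. Then C is a nonempty, weakly compact, convex subset of X that is invariant under the representation: T_s(C) ⊆ C for all s ∈ S. -/

import Mathlib

/-!
The L-decomposition `ξ = x + q` of a point of the bidual Chebyshev center gives
`‖ξ - b‖ = ‖x - b‖ + ‖q‖` for every `b ∈ B`, so `x` is a center of radius `r_B - ‖q‖` and
minimality of `r_B` forces `q = 0`: the center lies in `X`. Banach–Alaoglu makes the center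
nonempty and weak*-compact, and since the weak topology of `X` is induced by the weak* topology
of `X**`, it is weakly compact in `X`. In `X` the center is an intersection of closed balls around
the points of `B`, hence convex, and a nonexpansive `T_s` maps it into itself because every
`b ∈ B` is a limit of points `T_s b'` with `‖T_s x - T_s b'‖ ≤ ‖x - b'‖ ≤ r_B`.
-/

open NormedSpace Set

/-- The Chebyshev radius of a nonempty bounded subset `B` of a Banach space:
`r_B = inf {r ≥ 0 : ∃ x, sup_{b ∈ B} ‖x - b‖ ≤ r}`. -/
noncomputable def chebyshevRadius {Y : Type} [NormedAddCommGroup Y] (B : Set Y) : ℝ :=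
  sInf {r : ℝ | 0 ≤ r ∧ ∃ x : Y, ∀ b ∈ B, ‖x - b‖ ≤ r}

/-- The Chebyshev center of `B`: `C_B = {x : sup_{b ∈ B} ‖x - b‖ ≤ r_B}`. -/
noncomputable def chebyshevCenter {Y : Type} [NormedAddCommGroup Y] (B : Set Y) : Set Y :=
  {x : Y | ∀ b ∈ B, ‖x - b‖ ≤ chebyshevRadius B}

/-- A Banach space `X` is L-embedded if, identifying `X` with its canonical
image in the bidual `X**`, there is a closed subspace `X_s` of `X**` such
that `X** = X ⊕ X_s` with `‖x + ξ‖ = ‖x‖ + ‖ξ‖` for `x ∈ X`, `ξ ∈ X_s`. -/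
def IsLEmbedded (X : Type) [NormedAddCommGroup X] [NormedSpace ℝ X] : Prop :=
  ∃ Xs : Submodule ℝ (StrongDual ℝ (StrongDual ℝ X)),
    IsClosed (Xs : Set (StrongDual ℝ (StrongDual ℝ X))) ∧
    IsCompl (LinearMap.range (inclusionInDoubleDual ℝ X).toLinearMap) Xs ∧
    ∀ (x : X), ∀ ξ ∈ Xs,
      ‖inclusionInDoubleDual ℝ X x + ξ‖ = ‖inclusionInDoubleDual ℝ X x‖ + ‖ξ‖

open Metric

section ChebyshevCenter

variable {Y : Type} [NormedAddCommGroup Y]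

lemma chebyshevCenter_eq_iInter_closedBall (B : Set Y) :
    chebyshevCenter B = ⋂ b ∈ B, closedBall b (chebyshevRadius B) := by
  ext x
  simp only [chebyshevCenter, mem_ofPred_eq, mem_iInter, mem_closedBall, dist_eq_norm]

lemma chebyshevRadius_le {B : Set Y} {x : Y} {t : ℝ} (ht : 0 ≤ t)
    (h : ∀ b ∈ B, ‖x - b‖ ≤ t) : chebyshevRadius B ≤ t :=
  csInf_le ⟨0, fun _ hr => hr.1⟩ ⟨ht, x, h⟩

lemma exists_forall_norm_sub_le_chebyshevRadius_add {B : Set Y} (hB : Bornology.IsBounded B)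
    {ε : ℝ} (hε : 0 < ε) : ∃ x : Y, ∀ b ∈ B, ‖x - b‖ ≤ chebyshevRadius B + ε := by
  obtain ⟨M, hM⟩ := hB.subset_closedBall 0
  have hne : {r : ℝ | 0 ≤ r ∧ ∃ x : Y, ∀ b ∈ B, ‖x - b‖ ≤ r}.Nonempty := by
    refine ⟨max M 0, le_max_right _ _, 0, fun b hb => ?_⟩
    rw [zero_sub, norm_neg, ← dist_zero_right]
    exact (hM hb).trans (le_max_left _ _)
  obtain ⟨t, ⟨-, x, hx⟩, ht⟩ := exists_lt_of_csInf_lt hne (lt_add_of_pos_right _ hε)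
  exact ⟨x, fun b hb => (hx b hb).trans ht.le⟩

lemma nonpos_of_mem_chebyshevCenter {B : Set Y} (hB : B.Nonempty) {ξ y : Y} {c : ℝ}
    (hξ : ξ ∈ chebyshevCenter B) (h : ∀ b ∈ B, ‖y - b‖ + c ≤ ‖ξ - b‖) : c ≤ 0 := by
  obtain ⟨b₀, hb₀⟩ := hB
  have hy : ∀ b ∈ B, ‖y - b‖ ≤ chebyshevRadius B - c := fun b hb => by
    linarith [h b hb, hξ b hb]
  have := chebyshevRadius_le (by linarith [norm_nonneg (y - b₀), hy b₀ hb₀]) hy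
  linarith

lemma Isometry.preimage_chebyshevCenter_image {X : Type} [NormedAddCommGroup X] {f : X → Y}
    (hf : Isometry f) (B : Set X) :
    f ⁻¹' chebyshevCenter (f '' B) = ⋂ b ∈ B, closedBall b (chebyshevRadius (f '' B)) := by
  simp only [chebyshevCenter_eq_iInter_closedBall, biInter_image, preimage_iInter₂,
    hf.preimage_closedBall]

end ChebyshevCenter

lemma LipschitzWith.mapsTo_iInter_closedBall {α : Type*} [PseudoMetricSpace α] {f : α → α}
    (hf : LipschitzWith 1 f) {B : Set α} (hB : B ⊆ closure (f '' B)) (r : ℝ) :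
    MapsTo f (⋂ b ∈ B, closedBall b r) (⋂ b ∈ B, closedBall b r) := by
  intro x hx
  simp only [mem_iInter, mem_closedBall] at hx ⊢
  have himage : f '' B ⊆ closedBall (f x) r := by
    rintro _ ⟨b, hb, rfl⟩
    rw [mem_closedBall, dist_comm]
    exact (hf.dist_le_mul x b).trans (by simpa using hx b hb)
  intro b hb
  rw [← mem_closedBall, ← mem_closedBall_comm]
  exact closure_minimal himage isClosed_closedBall (hB hb)

section WeakDual

variable {𝕜 E : Type} [NontriviallyNormedField 𝕜] [NormedAddCommGroup E] [NormedSpace 𝕜 E]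

lemma WeakDual.isClosed_preimage_iInter_closedBall (B : Set (StrongDual 𝕜 E)) (t : ℝ) :
    IsClosed (toStrongDual ⁻¹' ⋂ b ∈ B, closedBall b t) := by
  simpa only [preimage_iInter₂] using isClosed_biInter fun b _ => isClosed_closedBall b t

lemma WeakDual.isCompact_preimage_iInter_closedBall [ProperSpace 𝕜] {B : Set (StrongDual 𝕜 E)}
    (hB : B.Nonempty) (t : ℝ) : IsCompact (toStrongDual ⁻¹' ⋂ b ∈ B, closedBall b t) :=
  let ⟨_, hb₀⟩ := hB
  (isCompact_closedBall _ t).of_isClosed_subset (isClosed_preimage_iInter_closedBall B t)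
    (preimage_mono (biInter_subset_of_mem hb₀))

lemma StrongDual.chebyshevCenter_nonempty [ProperSpace 𝕜] {B : Set (StrongDual 𝕜 E)}
    (hB : B.Nonempty) (hB_bdd : Bornology.IsBounded B) : (chebyshevCenter B).Nonempty := by
  set r := chebyshevRadius B
  let K : Ioi (0 : ℝ) → Set (WeakDual 𝕜 E) := fun ε =>
    WeakDual.toStrongDual ⁻¹' ⋂ b ∈ B, closedBall b (r + ε)
  have hK_mono : Monotone K := fun ε δ hεδ =>
    preimage_mono <| biInter_mono subset_rfl fun b _ =>
      closedBall_subset_closedBall (by gcongr)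
  have hK_ne : ∀ ε, (K ε).Nonempty := fun ⟨ε, hε⟩ => by
    obtain ⟨x, hx⟩ := exists_forall_norm_sub_le_chebyshevRadius_add hB_bdd hε
    refine ⟨StrongDual.toWeakDual x, ?_⟩
    simpa only [K, mem_preimage, mem_iInter, mem_closedBall, dist_eq_norm,
      StrongDual.toStrongDual_toWeakDual] using hx
  have : Nonempty (Ioi (0 : ℝ)) := nonempty_Ioi.to_subtype
  obtain ⟨ξ, hξ⟩ := IsCompact.nonempty_iInter_of_directed_nonempty_isCompact_isClosed K
    hK_mono.directed_ge hK_ne (fun _ => WeakDual.isCompact_preimage_iInter_closedBall hB _)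
    (fun _ => WeakDual.isClosed_preimage_iInter_closedBall B _)
  refine ⟨WeakDual.toStrongDual ξ, fun b hb => le_of_forall_pos_le_add fun ε hε => ?_⟩
  have := mem_iInter.1 hξ ⟨ε, hε⟩
  simp only [K, mem_preimage, mem_iInter, mem_closedBall, dist_eq_norm] at this
  exact this b hb

end WeakDual

lemma NormedSpace.isCompact_toWeakSpace_image_iff {𝕜 X : Type*} [RCLike 𝕜]
    [NormedAddCommGroup X] [NormedSpace 𝕜 X] (s : Set X) :
    IsCompact (toWeakSpace 𝕜 X '' s) ↔
      IsCompact (WeakDual.toStrongDual ⁻¹' (inclusionInDoubleDual 𝕜 X '' s)) := by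
  refine (isEmbedding_inclusionInDoubleDualWeak 𝕜 X).isCompact_iff.trans ?_
  rw [image_image]
  simp only [inclusionInDoubleDualWeak_apply, LinearEquiv.symm_apply_apply]
  rw [← image_image StrongDual.toWeakDual, LinearEquiv.image_eq_preimage_symm,
    StrongDual.symm_toWeakDual]

lemma IsLEmbedded.chebyshevCenter_subset_range {X : Type} [NormedAddCommGroup X]
    [NormedSpace ℝ X] (hX : IsLEmbedded X) {B : Set X} (hB : B.Nonempty) :
    chebyshevCenter (inclusionInDoubleDual ℝ X '' B) ⊆ range (inclusionInDoubleDual ℝ X) := by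
  obtain ⟨Xs, -, hcompl, hL⟩ := hX
  intro ξ hξ
  obtain ⟨⟨_, x, rfl⟩, ⟨q, hq⟩, hsum, -⟩ := Submodule.existsUnique_add_of_isCompl hcompl ξ
  simp only [ContinuousLinearMap.coe_coe] at hsum
  have hsplit : ∀ b ∈ B, ‖inclusionInDoubleDual ℝ X x - inclusionInDoubleDual ℝ X b‖ + ‖q‖ ≤
      ‖ξ - inclusionInDoubleDual ℝ X b‖ := fun b _ => by
    rw [← hsum, ← map_sub, add_sub_right_comm, ← map_sub, hL _ q hq]
  have hq_norm : ‖q‖ ≤ 0 :=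
    nonpos_of_mem_chebyshevCenter (hB.image _) hξ (forall_mem_image.2 hsplit)
  have hq0 : q = 0 := (norm_le_zero_iff (E := StrongDual ℝ (StrongDual ℝ X))).1 hq_norm
  exact ⟨x, by rw [← hsum, hq0, add_zero]⟩

theorem stmt13_general
    (S : Type)
    (X : Type) [NormedAddCommGroup X] [NormedSpace ℝ X]
    (hX : IsLEmbedded X)
    (T : S → X → X)
    (hnonexp : ∀ (s : S) (x y : X), ‖T s x - T s y‖ ≤ ‖x - y‖)
    (B : Set X) (hB_ne : B.Nonempty) (hB_bdd : Bornology.IsBounded B)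
    (hB_inv : ∀ s : S, B ⊆ closure (T s '' B)) :
    chebyshevCenter ((inclusionInDoubleDual ℝ X) '' B) ⊆
      Set.range (inclusionInDoubleDual ℝ X) ∧
    ((inclusionInDoubleDual ℝ X) ⁻¹'
      chebyshevCenter ((inclusionInDoubleDual ℝ X) '' B)).Nonempty ∧
    Convex ℝ ((inclusionInDoubleDual ℝ X) ⁻¹'
      chebyshevCenter ((inclusionInDoubleDual ℝ X) '' B)) ∧
    IsCompact ((toWeakSpace ℝ X) '' ((inclusionInDoubleDual ℝ X) ⁻¹'
      chebyshevCenter ((inclusionInDoubleDual ℝ X) '' B))) ∧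
    ∀ s : S, Set.MapsTo (T s)
      ((inclusionInDoubleDual ℝ X) ⁻¹'
        chebyshevCenter ((inclusionInDoubleDual ℝ X) '' B))
      ((inclusionInDoubleDual ℝ X) ⁻¹'
        chebyshevCenter ((inclusionInDoubleDual ℝ X) '' B)) := by
  set j := inclusionInDoubleDual ℝ X
  have hB' : (j '' B).Nonempty := hB_ne.image j
  have hrange : chebyshevCenter (j '' B) ⊆ range j := hX.chebyshevCenter_subset_range hB_ne
  have hj : Isometry j := (inclusionInDoubleDualLi ℝ).isometry
  have hC := hj.preimage_chebyshevCenter_image B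
  refine ⟨hrange, ?_, ?_, ?_, fun s => ?_⟩
  · obtain ⟨ξ, hξ⟩ := StrongDual.chebyshevCenter_nonempty (𝕜 := ℝ) hB'
      (hj.lipschitz.isBounded_image hB_bdd)
    obtain ⟨x, rfl⟩ := hrange hξ
    exact ⟨x, hξ⟩
  · rw [hC]
    exact convex_iInter₂ fun b _ => convex_closedBall b _
  · rw [isCompact_toWeakSpace_image_iff, image_preimage_eq_of_subset hrange,
      chebyshevCenter_eq_iInter_closedBall]
    exact WeakDual.isCompact_preimage_iInter_closedBall hB' _
  · rw [hC]
    exact (LipschitzWith.mk_one fun x y => by simpa only [dist_eq_norm] using hnonexp s x y)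
      |>.mapsTo_iInter_closedBall (hB_inv s) _

/-- let `S` be a discrete semigroup, `X` an L-embedded Banach
space, `{T_s : s ∈ S}` a representation of `S` on `X` by nonexpansive maps,
and `B` a nonempty bounded subset of `X` with `B ⊆ cl(T_s(B))` for all
`s ∈ S`. Let `C` be the Chebyshev center of `B` computed in `X**`. Then `C`
is contained in (the canonical image of) `X` and, regarded as a subset of
`X`, is nonempty, weakly compact, convex and invariant: `T_s(C) ⊆ C`. -/
theorem stmt13
    (S : Type) [Semigroup S]
    (X : Type) [NormedAddCommGroup X] [NormedSpace ℝ X] [CompleteSpace X]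
    (hX : IsLEmbedded X)
    (T : S → X → X)
    (hrep : ∀ (s t : S) (x : X), T (s * t) x = T s (T t x))
    (hnonexp : ∀ (s : S) (x y : X), ‖T s x - T s y‖ ≤ ‖x - y‖)
    (B : Set X) (hB_ne : B.Nonempty) (hB_bdd : Bornology.IsBounded B)
    (hB_inv : ∀ s : S, B ⊆ closure (T s '' B)) :
    chebyshevCenter ((inclusionInDoubleDual ℝ X) '' B) ⊆
      Set.range (inclusionInDoubleDual ℝ X) ∧
    ((inclusionInDoubleDual ℝ X) ⁻¹'
      chebyshevCenter ((inclusionInDoubleDual ℝ X) '' B)).Nonempty ∧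
    Convex ℝ ((inclusionInDoubleDual ℝ X) ⁻¹'
      chebyshevCenter ((inclusionInDoubleDual ℝ X) '' B)) ∧
    IsCompact ((toWeakSpace ℝ X) '' ((inclusionInDoubleDual ℝ X) ⁻¹'
      chebyshevCenter ((inclusionInDoubleDual ℝ X) '' B))) ∧
    ∀ s : S, Set.MapsTo (T s)
      ((inclusionInDoubleDual ℝ X) ⁻¹'
        chebyshevCenter ((inclusionInDoubleDual ℝ X) '' B))
      ((inclusionInDoubleDual ℝ X) ⁻¹'
        chebyshevCenter ((inclusionInDoubleDual ℝ X) '' B)) :=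
  stmt13_general S X hX T hnonexp B hB_ne hB_bdd hB_inv
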